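/- For a uniformly random single translocation on a permutation of odd length n, the probability that the center position ⌈n/2⌉ is displaced equals 1/2 + 2/(n−1) − 2/(n−1)². -/

import Mathlib

/-!
Moving entry `i` of the identity word to position `j` gives the identity when `i = j`, and
`(j + 1, j)` gives the same word as `(j, j + 1)`; on the remaining pairs the word determines the
pair, so there are `n² - n - (n - 1) = (n - 1)²` nonidentity translocations. Position `p` keeps its
entry exactly when `i` and `j` lie on the same side of `p`, i.e. when the translocation is one of
the block `[0, p)` or of the block `(p, n)`, so `(p - 1)² + (n - p - 2)²` of them fix `p`. For the
centre `p = c` of `n = 2c + 1` this leaves `(2c)² - 2(c - 1)²` translocations that displace it.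
-/

/-- The set of words of nonidentity translocations on `[n]` (0-indexed):
the identity word with some entry `i` moved to position `j`, excluding the identity. -/
def transWords (n : ℕ) : Finset (List ℕ) :=
  (((Finset.range n) ×ˢ (Finset.range n)).image
      (fun p : ℕ × ℕ => ((List.range n).eraseIdx p.1).insertIdx p.2 p.1)) \
    {List.range n}

open Finset

def translocation (n i j : ℕ) : List ℕ := ((List.range n).eraseIdx i).insertIdx j i

/-- The entry at position `k` of `translocation n i j`. -/
def translocationEntry (i j k : ℕ) : ℕ :=
  if k < j then (if k < i then k else k + 1)
  else if k = j then i
  else if k - 1 < i then k - 1 else k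

def translocationPairs (n : ℕ) : Finset (ℕ × ℕ) :=
  (range n ×ˢ range n).filter fun q => q.1 ≠ q.2 ∧ q.1 ≠ q.2 + 1

section Translocation

variable {n i j k : ℕ}

lemma length_translocation (hi : i < n) (hj : j < n) : (translocation n i j).length = n := by
  have : ((List.range n).eraseIdx i).length = n - 1 := by simp [List.length_eraseIdx, hi]
  rw [translocation, List.length_insertIdx_of_le_length (by omega), this]
  omega

lemma getElem_translocation (h : k < (translocation n i j).length) :
    (translocation n i j)[k] = translocationEntry i j k := by
  unfold translocation at h ⊢
  rcases lt_trichotomy k j with hkj | rfl | hjk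
  · rw [List.getElem_insertIdx_of_lt hkj h]
    simp only [List.getElem_eraseIdx, List.getElem_range, translocationEntry]
    split_ifs <;> omega
  · simp [List.getElem_insertIdx_self h, translocationEntry]
  · obtain ⟨d, rfl⟩ : ∃ d, k = j + d + 1 := ⟨k - j - 1, by omega⟩
    have := List.length_insertIdx_le_succ (l := (List.range n).eraseIdx i) (i := j) (x := i)
    rw [List.getElem_insertIdx_add_succ _ _ _ _ (by omega)]
    simp only [List.getElem_eraseIdx, List.getElem_range, translocationEntry]
    split_ifs <;> omega

lemma getD_translocation (hi : i < n) (hj : j < n) (hk : k < n) :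
    (translocation n i j).getD k 0 = translocationEntry i j k := by
  rw [List.getD_eq_getElem _ _ (by rwa [length_translocation hi hj]), getElem_translocation]

lemma translocation_eq_of_forall_getD (hi : i < n) (hj : j < n) {l : List ℕ} (hl : l.length = n)
    (h : ∀ k < n, translocationEntry i j k = l.getD k 0) : translocation n i j = l := by
  refine List.ext_getElem (by rw [length_translocation hi hj, hl]) fun k h₁ h₂ => ?_
  rw [getElem_translocation, h k (by omega), List.getD_eq_getElem]

lemma translocation_self (hi : i < n) : translocation n i i = List.range n :=
  translocation_eq_of_forall_getD hi hi List.length_range fun k hk => by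
    rw [List.getD_eq_getElem _ _ (by simpa), List.getElem_range, translocationEntry]
    split_ifs <;> omega

lemma translocation_succ_left (hj : j + 1 < n) :
    translocation n (j + 1) j = translocation n j (j + 1) :=
  translocation_eq_of_forall_getD hj (by omega) (length_translocation (by omega) hj) fun k hk => by
    rw [getD_translocation (by omega) hj hk, translocationEntry, translocationEntry]
    split_ifs <;> omega

lemma translocation_ne_range (hi : i < n) (hj : j < n) (hij : i ≠ j) :
    translocation n i j ≠ List.range n := by
  intro h
  have := getD_translocation hi hj (k := min i j) (by omega)
  rw [h, List.getD_eq_getElem _ _ (by simp; omega), List.getElem_range,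
    translocationEntry] at this
  split_ifs at this <;> omega

/-- The first position that moves is `min i j`; it then holds `i + 1` or `i` according as
`i < j` or `j < i`, which recovers `i`, and `j` is the position holding `i`. -/
lemma translocationEntry_injective {i' j' : ℕ} (hij : i ≠ j) (hij₁ : i ≠ j + 1)
    (hij' : i' ≠ j') (hij₁' : i' ≠ j' + 1) (hi : i < n) (hj : j < n) (hi' : i' < n)
    (hj' : j' < n) (h : ∀ k < n, translocationEntry i j k = translocationEntry i' j' k) :
    i = i' ∧ j = j' := by
  have hmin : min i j = min i' j' := by
    rcases lt_trichotomy (min i j) (min i' j') with hlt | heq | hgt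
    · have h₁ := h (min i j) (by omega)
      revert h₁; unfold translocationEntry; split_ifs <;> omega
    · exact heq
    · have h₁ := h (min i' j') (by omega)
      revert h₁; unfold translocationEntry; split_ifs <;> omega
  have hi : i = i' := by
    have h₁ := h (min i j) (by omega)
    revert h₁; unfold translocationEntry; split_ifs <;> omega
  subst hi
  have h₁ := h j' hj'
  revert h₁; unfold translocationEntry; split_ifs <;> omega

lemma injOn_translocation :
    Set.InjOn (fun q : ℕ × ℕ => translocation n q.1 q.2) (translocationPairs n) := by
  rintro ⟨i, j⟩ hq ⟨i', j'⟩ hq' (heq : translocation n i j = translocation n i' j')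
  simp only [translocationPairs, coe_filter, mem_product, mem_range, Set.mem_ofPred_eq] at hq hq'
  obtain ⟨⟨hi, hj⟩, hij, hij₁⟩ := hq
  obtain ⟨⟨hi', hj'⟩, hij', hij₁'⟩ := hq'
  obtain ⟨rfl, rfl⟩ := translocationEntry_injective hij hij₁ hij' hij₁' hi hj hi' hj' fun k hk => by
    rw [← getD_translocation hi hj hk, ← getD_translocation hi' hj' hk, heq]
  rfl

lemma transWords_eq_image :
    transWords n = (translocationPairs n).image fun q => translocation n q.1 q.2 := by
  ext w
  simp only [transWords, translocation, mem_sdiff, mem_image, mem_singleton, translocationPairs,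
    mem_filter, mem_product, mem_range, Prod.exists]
  constructor
  · rintro ⟨⟨i, j, ⟨hi, hj⟩, rfl⟩, hne⟩
    rcases eq_or_ne i j with rfl | hij
    · exact absurd (translocation_self hi) hne
    rcases eq_or_ne i (j + 1) with rfl | hij₁
    · exact ⟨j, j + 1, ⟨⟨hj, hi⟩, by omega, by omega⟩, (translocation_succ_left hi).symm⟩
    · exact ⟨i, j, ⟨⟨hi, hj⟩, hij, hij₁⟩, rfl⟩
  · rintro ⟨i, j, ⟨⟨hi, hj⟩, hij, -⟩, rfl⟩
    exact ⟨⟨i, j, ⟨hi, hj⟩, rfl⟩, translocation_ne_range hi hj hij⟩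

end Translocation

section Counting

variable {n p : ℕ}

lemma translocationEntry_eq_self_iff {i j : ℕ} :
    translocationEntry i j p = p ↔ (i < p ∧ j < p) ∨ (p < i ∧ p < j) ∨ (i = p ∧ j = p) := by
  unfold translocationEntry; split_ifs <;> omega

lemma card_translocationPairs : #(translocationPairs n) = (n - 1) ^ 2 := by
  have hpairs : translocationPairs n = (range n).offDiag.filter fun q => q.1 ≠ q.2 + 1 := by
    ext; simp [translocationPairs, and_assoc]
  have hadjacent : ((range n).offDiag.filter fun q => ¬q.1 ≠ q.2 + 1) =
      (range (n - 1)).image fun j => (j + 1, j) := by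
    ext ⟨i, j⟩
    simp only [mem_filter, mem_offDiag, mem_range, mem_image, Prod.mk.injEq]
    constructor
    · rintro ⟨⟨hi, -, -⟩, hadj⟩
      exact ⟨j, by omega, by omega, rfl⟩
    · rintro ⟨a, ha, rfl, rfl⟩
      omega
  have hsplit := card_filter_add_card_filter_not (s := (range n).offDiag) fun q => q.1 ≠ q.2 + 1
  rw [← hpairs, hadjacent, card_image_of_injective _ fun _ _ h => (Prod.mk.inj h).2, card_range,
    offDiag_card, card_range] at hsplit
  have hsquare : (n - 1) ^ 2 + (n - 1) + n = n * n := by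
    rcases n with _ | m
    · rfl
    · rw [add_tsub_cancel_right]; ring
  omega

lemma filter_translocationPairs_entry_eq_self (hp : p < n) :
    (translocationPairs n).filter (fun q => translocationEntry q.1 q.2 p = p) =
      translocationPairs p ∪ (translocationPairs (n - p - 1)).map
        ((addRightEmbedding (p + 1)).prodMap (addRightEmbedding (p + 1))) := by
  ext ⟨i, j⟩
  simp only [translocationPairs, mem_filter, mem_union, mem_map, mem_product, mem_range,
    translocationEntry_eq_self_iff, Prod.exists, Function.Embedding.coe_prodMap, Prod.map_apply,
    addRightEmbedding_apply, Prod.mk.injEq]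
  constructor
  · rintro ⟨⟨⟨hi, hj⟩, hij, hij₁⟩, hfix⟩
    by_cases hleft : i < p
    · left; omega
    · right; exact ⟨i - (p + 1), j - (p + 1), by omega⟩
  · rintro (h | ⟨a, b, h, rfl, rfl⟩) <;> omega

/-- Truncated subtraction makes this right also for `p = 0` and `p = n - 1`, where one of the two
blocks is empty. -/
lemma card_filter_transWords_getD_ne_add (hp : p < n) :
    #((transWords n).filter fun w => w.getD p 0 ≠ p) + (p - 1) ^ 2 + (n - p - 2) ^ 2 =
      (n - 1) ^ 2 := by
  have hdisplaced : #((transWords n).filter fun w => w.getD p 0 ≠ p) =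
      #((translocationPairs n).filter fun q => ¬translocationEntry q.1 q.2 p = p) := by
    rw [transWords_eq_image, filter_image, card_image_of_injOn
      (injOn_translocation.mono (filter_subset _ _))]
    congr 1
    refine filter_congr fun q hq => ?_
    simp only [translocationPairs, mem_filter, mem_product, mem_range] at hq
    rw [getD_translocation hq.1.1 hq.1.2 hp]
  have hfixed : #((translocationPairs n).filter fun q => translocationEntry q.1 q.2 p = p) =
      (p - 1) ^ 2 + (n - p - 2) ^ 2 := by
    rw [filter_translocationPairs_entry_eq_self hp, card_union_of_disjoint, card_map,
      card_translocationPairs, card_translocationPairs, Nat.sub_sub (n - p)]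
    refine disjoint_left.2 ?_
    rintro ⟨i, j⟩ hleft hright
    simp only [translocationPairs, mem_filter, mem_map, mem_product, mem_range] at hleft hright
    obtain ⟨⟨a, b⟩, -, hab⟩ := hright
    simp only [Function.Embedding.coe_prodMap, Prod.map_apply, addRightEmbedding_apply,
      Prod.mk.injEq] at hab
    omega
  rw [hdisplaced, add_assoc, ← hfixed, add_comm, card_filter_add_card_filter_not,
    card_translocationPairs]

end Counting

/-- For a uniformly random nonidentity translocation on a permutation of odd length
`n`, the probability that the center position `⌈n/2⌉ = (n+1)/2` is displaced equals
`1/2 + 2/(n−1) − 2/(n−1)²`. -/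
theorem center_displacement_probability_odd (n : ℕ) (hn : 3 ≤ n) (hodd : Odd n) :
    (((transWords n).filter
          (fun w => w.getD ((n + 1) / 2 - 1) 0 ≠ (n + 1) / 2 - 1)).card : ℚ)
        / ((n : ℚ) - 1) ^ 2
      = 1 / 2 + 2 / ((n : ℚ) - 1) - 2 / ((n : ℚ) - 1) ^ 2 := by
  obtain ⟨c, rfl⟩ : ∃ c, n = 2 * (c + 1) + 1 := by
    obtain ⟨m, rfl⟩ := hodd; exact ⟨m - 1, by omega⟩
  have hcenter : (2 * (c + 1) + 1 + 1) / 2 - 1 = c + 1 := by omega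
  have hcount := card_filter_transWords_getD_ne_add (n := 2 * (c + 1) + 1) (p := c + 1) (by omega)
  rw [hcenter]
  simp only [show 2 * (c + 1) + 1 - (c + 1) - 2 = c by omega, add_tsub_cancel_right] at hcount
  have hcountℚ : (#((transWords (2 * (c + 1) + 1)).filter fun w => w.getD (c + 1) 0 ≠ c + 1) : ℚ)
      + c ^ 2 + c ^ 2 = (2 * (c + 1)) ^ 2 := by
    exact_mod_cast hcount
  push_cast
  field_simp
  linear_combination 2 * hcountℚ
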